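/- Let g ∈ L²([0,π]), ḡ its primitive, and f̂ = T(ḡ)' the left derivative of the least concave majorant of ḡ. Then ∫₀^π (T(ḡ)(t) − ḡ(t)) d f̂(t) = 0, where d f̂ denotes the Stieltjes measure induced by the monotone function f̂. -/

import Mathlib

open Set MeasureTheory intervalIntegral Real

/-- Least concave majorant of `h` on `[a,b]`. -/
noncomputable def lcm (a b : ℝ) (h : ℝ → ℝ) (t : ℝ) : ℝ :=
  sInf {y : ℝ | ∃ z : ℝ → ℝ, ConcaveOn ℝ (Icc a b) z ∧ (∀ x ∈ Icc a b, h x ≤ z x) ∧ y = z t}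

/-!
The integrand `T(ḡ) - ḡ` is nonnegative and vanishes on the contact set, so it suffices that
`d f̂` gives no mass to the set where `ḡ < T(ḡ)`. Near such a point `t`, continuity of `ḡ` and
lower semicontinuity of the concave `T(ḡ)` give an interval `[c, d]` around `t` on which `ḡ`
stays below both `T(ḡ) c` and `T(ḡ) d`; there `T(ḡ)` is affine, so `f̂` is constant and
`d f̂` vanishes on a neighbourhood of `t`. Second countability turns this local statement into
a global one.
-/

open Filter Topology

section Secant

variable {s : Set ℝ} {f : ℝ → ℝ} {c d x : ℝ}

lemma add_slope_mul_sub_self (f : ℝ → ℝ) (c d : ℝ) : f c + slope f c d * (d - c) = f d := by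
  have := sub_smul_slope f c d
  rw [smul_eq_mul, vsub_eq_sub] at this
  linarith

lemma ConcaveOn.add_slope_mul_le (hf : ConcaveOn ℝ s f) (hc : c ∈ s) (hd : d ∈ s)
    (hcx : c ≤ x) (hxd : x ≤ d) : f c + slope f c d * (x - c) ≤ f x := by
  rcases hcx.eq_or_lt with rfl | hcx
  · simp
  have hx : x ∈ s := hf.1.ordConnected.out hc hd ⟨hcx.le, hxd⟩
  have hslope : slope f c d ≤ slope f c x :=
    hf.slope_anti hc ⟨hx, hcx.ne'⟩ ⟨hd, (hcx.trans_le hxd).ne'⟩ hxd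
  have := add_slope_mul_sub_self f c x
  nlinarith

lemma ConcaveOn.le_add_slope_mul (hf : ConcaveOn ℝ s f) (hc : c ∈ s) (hd : d ∈ s) (hcd : c < d)
    (hx : x ∈ s) (hx' : x ∉ Ioo c d) : f x ≤ f c + slope f c d * (x - c) := by
  have hdc : d ∈ s \ {c} := ⟨hd, hcd.ne'⟩
  have hxc := add_slope_mul_sub_self f c x
  rcases le_or_gt x c with hxc' | hcx
  · rcases hxc'.eq_or_lt with rfl | hxc'
    · simp
    have := hf.slope_anti hc ⟨hx, hxc'.ne⟩ hdc (hxc'.le.trans hcd.le)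
    nlinarith
  · have hdx : d ≤ x := not_lt.1 fun h => hx' ⟨hcx, h⟩
    have := hf.slope_anti hc hdc ⟨hx, (hcd.trans_le hdx).ne'⟩ hdx
    nlinarith

lemma concaveOn_secant (hs : Convex ℝ s) (f : ℝ → ℝ) (c d : ℝ) :
    ConcaveOn ℝ s fun x => f c + slope f c d * (x - c) := by
  refine ⟨hs, fun x _ y _ a b _ _ hab => ?_⟩
  simp only [smul_eq_mul]
  linear_combination (f c - slope f c d * c) * hab

-- On each side of `t`, a concave `f` dominates a secant line through `(t, f t)`.
lemma ConcaveOn.lowerSemicontinuousWithinAt_Icc {a b t : ℝ} (hf : ConcaveOn ℝ (Icc a b) f)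
    (ht : t ∈ Icc a b) : LowerSemicontinuousWithinAt f (Icc a b) t := by
  intro m hm
  have secant_eventually (c d : ℝ) (hcd : f c + slope f c d * (t - c) = f t) :
      ∀ᶠ x in 𝓝 t, m < f c + slope f c d * (x - c) :=
    (hcd ▸ (by fun_prop : Continuous fun x => f c + slope f c d * (x - c)).tendsto t)
      |>.eventually_const_lt hm
  have ha : a ∈ Icc a b := ⟨le_rfl, ht.1.trans ht.2⟩
  have hb : b ∈ Icc a b := ⟨ht.1.trans ht.2, le_rfl⟩
  rw [← Icc_union_Icc_eq_Icc ht.1 ht.2, nhdsWithin_union, eventually_sup]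
  constructor
  · filter_upwards [nhdsWithin_le_nhds (secant_eventually a t (add_slope_mul_sub_self f a t)),
      self_mem_nhdsWithin] with x hx hxt
    exact hx.trans_le (hf.add_slope_mul_le ha ht hxt.1 hxt.2)
  · filter_upwards [nhdsWithin_le_nhds (secant_eventually t b (by simp)),
      self_mem_nhdsWithin] with x hx hxt
    exact hx.trans_le (hf.add_slope_mul_le ht hb hxt.1 hxt.2)

end Secant

lemma HasDerivWithinAt.eq_of_eqOn_affine {f : ℝ → ℝ} {f' k c d t : ℝ}
    (hderiv : HasDerivWithinAt f f' (Iio t) t) (hf : EqOn f (fun x => f c + k * (x - c)) (Icc c d))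
    (ht : t ∈ Ioc c d) : f' = k := by
  have hline : HasDerivWithinAt (fun x => f c + k * (x - c)) k (Iio t) t := by
    simpa using (((hasDerivAt_id t).sub_const c).const_mul k).const_add (f c) |>.hasDerivWithinAt
  have hf_eq : f =ᶠ[𝓝[<] t] fun x => f c + k * (x - c) := by
    filter_upwards [Ioo_mem_nhdsLT ht.1] with x hx using hf ⟨hx.1.le, hx.2.le.trans ht.2⟩
  exact (uniqueDiffWithinAt_Iio t).eq_deriv _ hderiv
    (hline.congr_of_eventuallyEq hf_eq (hf ⟨ht.1.le, ht.2⟩))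

lemma exists_Icc_subset_of_eventually_nhdsWithin_Icc {a b t : ℝ} {p : ℝ → Prop}
    (ht : t ∈ Ioc a b) (hp : ∀ᶠ x in 𝓝[Icc a b] t, p x) :
    ∃ c d, a < c ∧ d ≤ b ∧ Ioc c d ∈ 𝓝[Iic b] t ∧ ∀ x ∈ Icc c d, p x := by
  obtain ⟨ε, hε, hball⟩ := Metric.mem_nhdsWithin_iff.1 hp
  refine ⟨max ((a + t) / 2) (t - ε / 2), min b (t + ε / 2),
    lt_max_of_lt_left (by linarith [ht.1]), min_le_left _ _, ?_, fun x hx => ?_⟩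
  · have hIoo : Ioo (max ((a + t) / 2) (t - ε / 2)) (t + ε / 2) ∈ 𝓝 t :=
      Ioo_mem_nhds (max_lt (by linarith [ht.1]) (by linarith)) (by linarith)
    filter_upwards [inter_mem_nhdsWithin (Iic b) hIoo] with x hx
    exact ⟨hx.2.1, le_min hx.1 hx.2.2.le⟩
  · have hcx := le_trans (le_max_right _ _) hx.1
    have hxd := le_trans hx.2 (min_le_right _ _)
    refine hball ⟨?_, (lt_max_of_lt_left (by linarith [ht.1])).le.trans hx.1,
      hx.2.trans (min_le_left _ _)⟩
    rw [Metric.mem_ball, Real.dist_eq, abs_sub_lt_iff]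
    constructor <;> linarith

section LeastConcaveMajorant

variable {a b c d t : ℝ} {h : ℝ → ℝ}

lemma lcm_le_of_concaveOn {z : ℝ → ℝ} (hz : ConcaveOn ℝ (Icc a b) z)
    (hhz : ∀ x ∈ Icc a b, h x ≤ z x) (ht : t ∈ Icc a b) : lcm a b h t ≤ z t :=
  csInf_le ⟨h t, fun _ ⟨_, _, hhw, hy⟩ => hy ▸ hhw t ht⟩ ⟨z, hz, hhz, rfl⟩

lemma nonempty_concave_majorants (hh : BddAbove (h '' Icc a b)) (t : ℝ) :
    Set.Nonempty
      {y : ℝ | ∃ z : ℝ → ℝ, ConcaveOn ℝ (Icc a b) z ∧ (∀ x ∈ Icc a b, h x ≤ z x) ∧ y = z t} :=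
  let ⟨C, hC⟩ := hh
  ⟨C, fun _ => C, concaveOn_const C (convex_Icc a b), fun _ hx => hC (mem_image_of_mem h hx), rfl⟩

lemma le_lcm (hh : BddAbove (h '' Icc a b)) (ht : t ∈ Icc a b) : h t ≤ lcm a b h t :=
  le_csInf (nonempty_concave_majorants hh t) fun _ ⟨_, _, hhz, hy⟩ => hy ▸ hhz t ht

lemma concaveOn_lcm (hh : BddAbove (h '' Icc a b)) : ConcaveOn ℝ (Icc a b) (lcm a b h) := by
  refine ⟨convex_Icc a b, fun x hx y hy p q hp hq hpq => ?_⟩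
  refine le_csInf (nonempty_concave_majorants hh _) ?_
  rintro _ ⟨z, hz, hhz, rfl⟩
  calc p • lcm a b h x + q • lcm a b h y ≤ p • z x + q • z y := by
        gcongr
        · exact lcm_le_of_concaveOn hz hhz hx
        · exact lcm_le_of_concaveOn hz hhz hy
    _ ≤ z (p • x + q • y) := hz.2 hx hy hp hq hpq

/-- Between two points where the majorant lies strictly above `h`, it can be cut down to its
secant without ceasing to be a concave majorant. -/
lemma lcm_eqOn_secant (hh : BddAbove (h '' Icc a b)) (hac : a ≤ c) (hcd : c < d) (hdb : d ≤ b)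
    (hlt : ∀ x ∈ Icc c d, h x < min (lcm a b h c) (lcm a b h d)) :
    EqOn (lcm a b h) (fun x => lcm a b h c + slope (lcm a b h) c d * (x - c)) (Icc c d) := by
  set T := lcm a b h
  set L := fun x => T c + slope T c d * (x - c)
  have hT := concaveOn_lcm hh
  have hL := concaveOn_secant (convex_Icc a b) T c d
  have hc : c ∈ Icc a b := ⟨hac, hcd.le.trans hdb⟩
  have hd : d ∈ Icc a b := ⟨hac.trans hcd.le, hdb⟩
  have hLc : L c = T c := by simp [L]
  have hLd : L d = T d := add_slope_mul_sub_self T c d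
  have h_le_L : ∀ x ∈ Icc a b, h x ≤ L x := by
    intro x hx
    by_cases hx' : x ∈ Ioo c d
    · have hseg : x ∈ segment ℝ c d := (segment_eq_Icc hcd.le).symm ▸ Ioo_subset_Icc_self hx'
      have : min (L c) (L d) ≤ L x := hL.ge_on_segment hc hd hseg
      rw [hLc, hLd] at this
      exact (hlt x (Ioo_subset_Icc_self hx')).le.trans this
    · exact (le_lcm hh hx).trans (hT.le_add_slope_mul hc hd hcd hx hx')
  intro x hx
  have hxab : x ∈ Icc a b := ⟨hac.trans hx.1, hx.2.trans hdb⟩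
  refine le_antisymm ?_ (hT.add_slope_mul_le hc hd hx.1 hx.2)
  exact (lcm_le_of_concaveOn (hT.inf hL) (fun y hy => le_inf (le_lcm hh hy) (h_le_L y hy))
    hxab).trans inf_le_right

theorem measure_setOf_lt_lcm_eq_zero (hh : ContinuousOn h (Icc a b)) {f' : ℝ → ℝ}
    (hf' : ∀ t ∈ Ioc a b, HasDerivWithinAt (lcm a b h) (f' t) (Iio t) t) {μ : Measure ℝ}
    (hμ : ∀ s t, s ∈ Ioc a b → t ∈ Ioc a b → s ≤ t →
      μ (Ioc s t) = ENNReal.ofReal (f' s - f' t)) :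
    μ {t ∈ Ioc a b | h t < lcm a b h t} = 0 := by
  have hbdd := isCompact_Icc.bddAbove_image hh
  refine measure_null_of_locally_null _ fun t ⟨ht, hlt⟩ => ?_
  obtain ⟨m, hhm, hmT⟩ := exists_between hlt
  have htIcc : t ∈ Icc a b := Ioc_subset_Icc_self ht
  have hnear : ∀ᶠ x in 𝓝[Icc a b] t, h x < m ∧ m < lcm a b h x :=
    (Tendsto.eventually_lt_const hhm (hh t htIcc)).and
      ((concaveOn_lcm hbdd).lowerSemicontinuousWithinAt_Icc htIcc m hmT)
  obtain ⟨c, d, hac, hdb, hnhds, hcd⟩ := exists_Icc_subset_of_eventually_nhdsWithin_Icc ht hnear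
  obtain ⟨hct, htd⟩ : t ∈ Ioc c d := mem_of_mem_nhdsWithin ht.2 hnhds
  have hc : c ∈ Icc c d := ⟨le_rfl, (hct.trans_le htd).le⟩
  have hd : d ∈ Icc c d := ⟨(hct.trans_le htd).le, le_rfl⟩
  have haffine := lcm_eqOn_secant hbdd hac.le (hct.trans_le htd) hdb fun x hx =>
    (hcd x hx).1.trans (lt_min (hcd c hc).2 (hcd d hd).2)
  have hconst : ∀ s ∈ Ioc c d, f' s = slope (lcm a b h) c d := fun s hs =>
    (hf' s ⟨hac.trans hs.1, hs.2.trans hdb⟩).eq_of_eqOn_affine haffine hs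
  -- `f' c` is a left derivative at `c` and need not be the slope, so start the interval later.
  have hc' : (c + t) / 2 ∈ Ioc c d := ⟨by linarith, by linarith⟩
  refine ⟨Ioc ((c + t) / 2) d, nhdsWithin_mono _ (fun x hx => hx.1.2) ?_, ?_⟩
  · have hIoi : Ioi ((c + t) / 2) ∈ 𝓝 t := Ioi_mem_nhds (by linarith)
    filter_upwards [hnhds, mem_nhdsWithin_of_mem_nhds hIoi] with x hx hx' using ⟨hx', hx.2⟩
  · rw [hμ _ d ⟨hac.trans hc'.1, hc'.2.trans hdb⟩ ⟨hac.trans (hct.trans_le htd), hdb⟩ hc'.2,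
      hconst _ hc', hconst d ⟨hct.trans_le htd, le_rfl⟩, sub_self, ENNReal.ofReal_zero]

end LeastConcaveMajorant

theorem integral_lcm_minus_primitive_wrt_derivative_eq_zero_general (g : ℝ → ℝ)
    (hg : MemLp g 2 (volume.restrict (Icc 0 π)))
    (fhat : ℝ → ℝ)
    (hfhat : ∀ t ∈ Ioc 0 π,
      HasDerivWithinAt (lcm 0 π (fun t => ∫ s in (0:ℝ)..t, g s)) (fhat t) (Iio t) t)
    (μ : Measure ℝ)
    -- `μ` is the Stieltjes measure `|d f̂|` induced by the non-increasing `f̂`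
    (hμ : ∀ s t : ℝ, s ∈ Ioc 0 π → t ∈ Ioc 0 π → s ≤ t →
      μ (Ioc s t) = ENNReal.ofReal (fhat s - fhat t))
    (hμsupp : μ (Ioc 0 π)ᶜ = 0) :
    ∫ t in Icc 0 π, (lcm 0 π (fun t => ∫ s in (0:ℝ)..t, g s) t - ∫ s in (0:ℝ)..t, g s) ∂μ
      = 0 := by
  set G : ℝ → ℝ := fun t => ∫ s in (0:ℝ)..t, g s
  have hG : ContinuousOn G (Icc 0 π) := by
    rw [← uIcc_of_le pi_pos.le]
    exact continuousOn_primitive_interval (uIcc_of_le pi_pos.le ▸ hg.integrable one_le_two)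
  have hcontact := measure_setOf_lt_lcm_eq_zero hG hfhat hμ
  refine integral_eq_zero_of_ae (ae_restrict_of_ae ?_)
  filter_upwards [mem_ae_iff.2 hμsupp, measure_eq_zero_iff_ae_notMem.1 hcontact] with t ht hGT
  exact sub_eq_zero.2 (le_antisymm (not_lt.1 fun hlt => hGT ⟨ht, hlt⟩)
    (le_lcm (isCompact_Icc.bddAbove_image hG) (Ioc_subset_Icc_self ht)))

/-- `∫₀^π (T(ḡ) − ḡ) d f̂ = 0`, where `f̂ = T(ḡ)'` is the non-increasing left derivative
of the least concave majorant of the primitive `ḡ` of `g`, and `d f̂` is the Stieltjes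
measure induced by the monotone function `f̂`. -/
theorem integral_lcm_minus_primitive_wrt_derivative_eq_zero (g : ℝ → ℝ)
    (hg : MemLp g 2 (volume.restrict (Icc 0 π)))
    (fhat : ℝ → ℝ)
    (hfhat : ∀ t ∈ Ioc 0 π,
      HasDerivWithinAt (lcm 0 π (fun t => ∫ s in (0:ℝ)..t, g s)) (fhat t) (Iio t) t)
    (hmono : AntitoneOn fhat (Ioc 0 π))
    (μ : Measure ℝ) (hμfin : IsFiniteMeasure μ)
    -- `μ` is the Stieltjes measure `|d f̂|` induced by the non-increasing `f̂`
    (hμ : ∀ s t : ℝ, s ∈ Ioc 0 π → t ∈ Ioc 0 π → s ≤ t →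
      μ (Ioc s t) = ENNReal.ofReal (fhat s - fhat t))
    (hμsupp : μ (Ioc 0 π)ᶜ = 0) :
    ∫ t in Icc 0 π, (lcm 0 π (fun t => ∫ s in (0:ℝ)..t, g s) t - ∫ s in (0:ℝ)..t, g s) ∂μ
      = 0 :=
  integral_lcm_minus_primitive_wrt_derivative_eq_zero_general g hg fhat hfhat μ hμ hμsupp
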